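/- arXiv:2202.12921 — 3 statements merged into one kernel-verified Lean document; each statement's English description precedes it below -/
import Mathlib

section
/- For reals s⁺ and s₁⁻,...,s_n⁻ with n ≥ 1, log(1 + ∑_j exp(s_j⁻ - s⁺)) ≥ (1/n) ∑_j max(0, s_j⁻ - s⁺). (The contrastive loss upper bounds the mean zero-margin triplet loss.) -/
open Real Finset

/-
Each hinge term is dominated by the contrastive loss: `0 ≤ log (1 + ∑ exp)` because the argument
is at least `1`, and `x i ≤ log (1 + ∑ exp)` because `exp (x i)` is one of the summands. A mean of
terms bounded by a nonnegative constant is bounded by it (nonnegativity covers the empty family,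
where the mean is `0`).
-/

lemma Real.log_one_add_sum_exp_nonneg {ι : Type*} [Fintype ι] (x : ι → ℝ) :
    0 ≤ log (1 + ∑ k, exp (x k)) :=
  log_nonneg (le_add_of_nonneg_right (sum_nonneg fun k _ => (exp_pos (x k)).le))

lemma Real.max_zero_le_log_one_add_sum_exp {ι : Type*} [Fintype ι] (x : ι → ℝ) (i : ι) :
    max 0 (x i) ≤ log (1 + ∑ k, exp (x k)) := by
  refine max_le (log_one_add_sum_exp_nonneg x) ?_
  have hsingle : exp (x i) ≤ ∑ k, exp (x k) :=
    single_le_sum (fun k _ => (exp_pos (x k)).le) (mem_univ i)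
  rw [le_log_iff_exp_le (by positivity)]
  linarith

lemma Finset.one_div_card_mul_sum_le {ι : Type*} [Fintype ι] {f : ι → ℝ} {c : ℝ}
    (hf : ∀ i, f i ≤ c) (hc : 0 ≤ c) :
    (1 / Fintype.card ι) * ∑ i, f i ≤ c := by
  have hsum : ∑ i, f i ≤ Fintype.card ι * c := by
    simpa using sum_le_card_nsmul univ f c fun i _ => hf i
  calc (1 / Fintype.card ι) * ∑ i, f i
      ≤ (1 / Fintype.card ι) * (Fintype.card ι * c) := by gcongr
    _ = ((Fintype.card ι : ℝ)⁻¹ * Fintype.card ι) * c := by ring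
    _ ≤ c := mul_le_of_le_one_left hc inv_mul_le_one

theorem contrastive_ge_mean_triplet_general (n : ℕ) (sp : ℝ) (s : Fin n → ℝ) :
    Real.log (1 + ∑ j, Real.exp (s j - sp)) ≥
      (1 / n) * ∑ j, max 0 (s j - sp) := by
  simpa using one_div_card_mul_sum_le
    (max_zero_le_log_one_add_sum_exp (fun j => s j - sp)) (log_one_add_sum_exp_nonneg _)

theorem contrastive_ge_mean_triplet (n : ℕ) (hn : 1 ≤ n) (sp : ℝ) (s : Fin n → ℝ) :
    Real.log (1 + ∑ j, Real.exp (s j - sp)) ≥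
      (1 / n) * ∑ j, max 0 (s j - sp) :=
  contrastive_ge_mean_triplet_general n sp s
end

section
/- The Jaccard distance d_J(A,B) = 1 - μ(A∩B)/μ(A∪B) satisfies the triangle inequality for measurable sets A, B, C of finite positive measure under a measure μ (with the convention d_J(A,B) = 0 when μ(A∪B) = 0). -/
/-!
Writing `d_J(A, B) = μ(A ∆ B) / μ(A ∪ B)`, the inequality follows in three moves. Adding
`t = μ(B \ (A ∪ C))` to numerator and denominator of `d_J(A, C)` can only increase this ratio
(it is at most `1`) and turns the denominator into `μ(A ∪ B ∪ C)`. The new numerator is the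
measure of the disjoint union of `A ∆ C` and `B \ (A ∪ C)`, a set covered by `A ∆ B ∪ B ∆ C`.
Finally `μ(A ∪ B ∪ C)` dominates both `μ(A ∪ B)` and `μ(B ∪ C)`.
-/

open MeasureTheory

noncomputable def jaccardDist {α : Type*} [MeasurableSpace α] (μ : Measure α)
    (A B : Set α) : ℝ :=
  if μ (A ∪ B) = 0 then 0
  else 1 - (μ (A ∩ B)).toReal / (μ (A ∪ B)).toReal

open scoped symmDiff

section RatioBounds

variable {K : Type*} [Field K] [LinearOrder K] [IsStrictOrderedRing K] {x y z t : K}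

lemma div_le_add_div_add (hx : 0 ≤ x) (hxy : x ≤ y) (ht : 0 ≤ t) :
    x / y ≤ (x + t) / (y + t) := by
  rcases (hx.trans hxy).eq_or_lt with rfl | hy
  · rw [le_antisymm hxy hx, div_zero, zero_add]
    exact div_nonneg ht ht
  · rw [div_le_div_iff₀ hy (add_pos_of_pos_of_nonneg hy ht)]
    nlinarith

lemma div_le_div_of_le_of_le (hx : 0 ≤ x) (hxy : x ≤ y) (hyz : y ≤ z) : x / z ≤ x / y := by
  rcases hx.eq_or_lt with rfl | hx
  · simp
  · exact div_le_div_of_nonneg_left hx.le (hx.trans_le hxy) hyz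

end RatioBounds

section Jaccard

variable {α : Type*} [MeasurableSpace α] {μ : Measure α} [IsFiniteMeasure μ] {A B C : Set α}

lemma measureReal_symmDiff_add_inter (hA : MeasurableSet A) (hB : MeasurableSet B) :
    μ.real (A ∆ B) + μ.real (A ∩ B) = μ.real (A ∪ B) := by
  have h := measureReal_sdiff_add_inter (μ := μ) (s := A ∪ B) (hA.inter hB)
  rw [Set.inter_eq_right.mpr (Set.inter_subset_left.trans Set.subset_union_left)] at h
  rwa [symmDiff_eq_sup_sdiff_inf]

lemma jaccardDist_eq_measureReal_symmDiff_div (hA : MeasurableSet A) (hB : MeasurableSet B) :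
    jaccardDist μ A B = μ.real (A ∆ B) / μ.real (A ∪ B) := by
  unfold jaccardDist
  split_ifs with h
  · simp [measureReal_def, h]
  · have hpos : μ.real (A ∪ B) ≠ 0 := by
      simp [measureReal_def, ENNReal.toReal_eq_zero_iff, h]
    rw [← measureReal_def, ← measureReal_def, eq_div_iff hpos, sub_mul, one_mul,
      div_mul_cancel₀ _ hpos, ← measureReal_symmDiff_add_inter hA hB, add_sub_cancel_right]

lemma measureReal_union_eq_add_sdiff (hA : MeasurableSet A) (hB : MeasurableSet B)
    (hC : MeasurableSet C) : μ.real (A ∪ C ∪ B) = μ.real (A ∪ C) + μ.real (B \ (A ∪ C)) := by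
  rw [← measureReal_union Set.disjoint_sdiff_right (hB.diff (hA.union hC)), Set.union_sdiff_self]

lemma measureReal_symmDiff_add_sdiff_le (hA : MeasurableSet A) (hB : MeasurableSet B)
    (hC : MeasurableSet C) :
    μ.real (A ∆ C) + μ.real (B \ (A ∪ C)) ≤ μ.real (A ∆ B) + μ.real (B ∆ C) := by
  have hdisj : Disjoint (A ∆ C) (B \ (A ∪ C)) :=
    Set.disjoint_sdiff_right.mono_left Set.symmDiff_subset_union
  have hsub : B \ (A ∪ C) ⊆ A ∆ B :=
    (Set.sdiff_subset_sdiff_right Set.subset_union_left).trans Set.subset_union_right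
  calc μ.real (A ∆ C) + μ.real (B \ (A ∪ C)) = μ.real (A ∆ C ∪ B \ (A ∪ C)) :=
        (measureReal_union hdisj (hB.diff (hA.union hC))).symm
    _ ≤ μ.real (A ∆ B ∪ B ∆ C) := measureReal_mono (Set.union_subset (symmDiff_triangle A B C)
        (hsub.trans Set.subset_union_left))
    _ ≤ μ.real (A ∆ B) + μ.real (B ∆ C) := measureReal_union_le _ _

end Jaccard

theorem jaccardDist_triangle_general {α : Type*} [MeasurableSpace α] (μ : Measure α)
    [IsFiniteMeasure μ] (A B C : Set α)
    (hA : MeasurableSet A) (hB : MeasurableSet B) (hC : MeasurableSet C) :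
    jaccardDist μ A C ≤ jaccardDist μ A B + jaccardDist μ B C := by
  rw [jaccardDist_eq_measureReal_symmDiff_div hA hC, jaccardDist_eq_measureReal_symmDiff_div hA hB,
    jaccardDist_eq_measureReal_symmDiff_div hB hC]
  calc μ.real (A ∆ C) / μ.real (A ∪ C)
      ≤ (μ.real (A ∆ C) + μ.real (B \ (A ∪ C))) / μ.real (A ∪ C ∪ B) := by
        rw [measureReal_union_eq_add_sdiff hA hB hC]
        exact div_le_add_div_add measureReal_nonneg
          (measureReal_mono Set.symmDiff_subset_union) measureReal_nonneg
    _ ≤ (μ.real (A ∆ B) + μ.real (B ∆ C)) / μ.real (A ∪ C ∪ B) :=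
        div_le_div_of_nonneg_right (measureReal_symmDiff_add_sdiff_le hA hB hC) measureReal_nonneg
    _ = μ.real (A ∆ B) / μ.real (A ∪ C ∪ B) + μ.real (B ∆ C) / μ.real (A ∪ C ∪ B) :=
        add_div _ _ _
    _ ≤ μ.real (A ∆ B) / μ.real (A ∪ B) + μ.real (B ∆ C) / μ.real (B ∪ C) := by
        apply add_le_add <;>
          exact div_le_div_of_le_of_le measureReal_nonneg
            (measureReal_mono Set.symmDiff_subset_union) (measureReal_mono (by tauto_set))

theorem jaccardDist_triangle {α : Type*} [MeasurableSpace α] (μ : Measure α)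
    [IsFiniteMeasure μ] (A B C : Set α)
    (hA : MeasurableSet A) (hB : MeasurableSet B) (hC : MeasurableSet C)
    (hApos : 0 < μ A) (hBpos : 0 < μ B) (hCpos : 0 < μ C) :
    jaccardDist μ A C ≤ jaccardDist μ A B + jaccardDist μ B C :=
  jaccardDist_triangle_general μ A B C hA hB hC
end

section
/- For finite sets A, B, C, the Jaccard distance d_J(A,C) ≤ d_J(A,B) + d_J(B,C), where d_J(X,Y) = 1 - |X∩Y|/|X∪Y| (with d_J(X,Y)=0 when X∪Y = ∅). Hence d_J is a metric on finite subsets (up to equality of sets). -/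
/-!
Since `#X + #Y + #(X ∆ Y) = 2 #(X ∪ Y)`, the Jaccard distance is `2 e / (#X + #Y + e)` with
`e = #(X ∆ Y)`: the Steinhaus transform, with base point `∅`, of the symmetric-difference metric
(whose distance to `∅` is the cardinality). The Steinhaus transform of any metric satisfies the
triangle inequality: `t ↦ t / (k + t)` is monotone, which replaces `e(A, C)` by
`e(A, B) + e(B, C)`, and the triangle inequality through the base point shows the resulting common
denominator dominates each of the two denominators on the right.
-/

noncomputable def jaccardDistFinset {α : Type*} [DecidableEq α]
    (X Y : Finset α) : ℝ :=
  if X ∪ Y = ∅ then 0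
  else 1 - ((X ∩ Y).card : ℝ) / ((X ∪ Y).card : ℝ)

open Finset
open scoped symmDiff

theorem div_add_le_div_add {k s t : ℝ} (hk : 0 ≤ k) (hs : 0 ≤ s) (hst : s ≤ t) :
    s / (k + s) ≤ t / (k + t) := by
  rcases (add_nonneg hk hs).eq_or_lt with h | h
  · rw [← h, div_zero]
    exact div_nonneg (hs.trans hst) (by linarith)
  · rw [div_le_div_iff₀ h (by linarith)]
    nlinarith

theorem div_le_div_of_nonneg_left_of_le {u v w : ℝ} (hu : 0 ≤ u) (huv : u ≤ v) (hvw : v ≤ w) :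
    u / w ≤ u / v := by
  rcases hu.eq_or_lt with rfl | h
  · simp
  · exact div_le_div_of_nonneg_left hu (h.trans_le huv) hvw

/-- The triangle inequality for the Steinhaus transform `x / (a + c + x)`, where `x, y, z` are the
sides of a triangle and `a, b, c` the distances of its vertices to the base point. -/
theorem steinhaus_triangle {a b c x y z : ℝ} (ha : 0 ≤ a) (hb : 0 ≤ b) (hc : 0 ≤ c)
    (hx : 0 ≤ x) (hy : 0 ≤ y) (hz : 0 ≤ z) (hxyz : x ≤ y + z) (hay : b ≤ a + y)
    (hcz : b ≤ c + z) :
    x / (a + c + x) ≤ y / (a + b + y) + z / (b + c + z) :=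
  calc x / (a + c + x) ≤ (y + z) / (a + c + (y + z)) :=
        div_add_le_div_add (by positivity) hx hxyz
    _ = y / (a + c + (y + z)) + z / (a + c + (y + z)) := add_div _ _ _
    _ ≤ y / (a + b + y) + z / (b + c + z) := by
      gcongr ?_ + ?_
      · exact div_le_div_of_nonneg_left_of_le hy (by linarith) (by linarith)
      · exact div_le_div_of_nonneg_left_of_le hz (by linarith) (by linarith)

namespace Finset

variable {α : Type*} [DecidableEq α]

theorem card_symmDiff_add_card_inter (X Y : Finset α) : #(X ∆ Y) + #(X ∩ Y) = #(X ∪ Y) :=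
  calc #(X ∆ Y) + #(X ∩ Y) = #(X ∆ Y ∪ X ∩ Y) :=
        (card_union_of_disjoint (disjoint_symmDiff_inf X Y)).symm
    _ = #(X ∪ Y) := congrArg card (symmDiff_sup_inf X Y)

theorem card_add_card_add_card_symmDiff (X Y : Finset α) :
    #X + #Y + #(X ∆ Y) = 2 * #(X ∪ Y) := by
  have := card_union_add_card_inter X Y
  have := card_symmDiff_add_card_inter X Y
  omega

theorem card_symmDiff_triangle (X Y Z : Finset α) : #(X ∆ Z) ≤ #(X ∆ Y) + #(Y ∆ Z) :=
  (card_le_card (symmDiff_triangle X Y Z)).trans (card_union_le _ _)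

theorem card_le_card_add_card_symmDiff (X Y : Finset α) : #Y ≤ #X + #(X ∆ Y) := by
  rw [add_comm]
  exact (card_le_card (le_symmDiff_sup_left X Y)).trans (card_union_le _ _)

end Finset

theorem jaccardDistFinset_eq_card_symmDiff_div {α : Type*} [DecidableEq α] (X Y : Finset α) :
    jaccardDistFinset X Y = #(X ∆ Y) / #(X ∪ Y) := by
  unfold jaccardDistFinset
  split_ifs with h
  · simp [h]
  · have hpos : (0 : ℝ) < #(X ∪ Y) := by exact_mod_cast card_pos.2 (nonempty_iff_ne_empty.2 h)
    rw [← card_symmDiff_add_card_inter X Y] at hpos ⊢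
    field_simp
    push_cast
    ring

theorem jaccardDistFinset_eq_steinhaus {α : Type*} [DecidableEq α] (X Y : Finset α) :
    jaccardDistFinset X Y = 2 * (#(X ∆ Y) / (#X + #Y + #(X ∆ Y))) := by
  have h : (#X + #Y + #(X ∆ Y) : ℝ) = 2 * #(X ∪ Y) := by
    exact_mod_cast card_add_card_add_card_symmDiff X Y
  rw [jaccardDistFinset_eq_card_symmDiff_div, h]
  ring

theorem jaccardDistFinset_triangle {α : Type*} [DecidableEq α]
    (A B C : Finset α) :
    jaccardDistFinset A C ≤ jaccardDistFinset A B + jaccardDistFinset B C := by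
  have hAC : (#(A ∆ C) : ℝ) ≤ #(A ∆ B) + #(B ∆ C) := by
    exact_mod_cast card_symmDiff_triangle A B C
  have hBA : (#B : ℝ) ≤ #A + #(A ∆ B) := by
    exact_mod_cast card_le_card_add_card_symmDiff A B
  have hBC : (#B : ℝ) ≤ #C + #(B ∆ C) := by
    rw [symmDiff_comm]
    exact_mod_cast card_le_card_add_card_symmDiff C B
  have := steinhaus_triangle (by positivity) (by positivity) (by positivity) (by positivity)
    (by positivity) (by positivity) hAC hBA hBC
  simp only [jaccardDistFinset_eq_steinhaus]
  linarith
end
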